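/- arXiv:1005.3586 — 5 statements merged into one kernel-verified Lean document; each statement's English description precedes it below -/
import Mathlib

section
/- Let a ∈ ℂ with a ≠ 0 and let (x_n)_{n∈ℕ} be a sequence in ℂ satisfying x_{n+1}(x_n+a)(x_n+1/a) = −x_{n−1}(x_n−a)(x_n−1/a) for all n ≥ 1, such that for every n one has x_n ≠ 0 and (x_n+a)(x_n+1/a) ≠ 0. Then the quantity F(x_{n−1},x_n)² is independent of n, where F(u,v) = ((u²+1)(v²+1) + (a+1/a)(v−u)(uv+1))/(uv); i.e. F² is a conserved quantity of the second-order recurrence. -/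
open Complex

/-- The invariant rational function of the Case ii-1 mapping. -/
noncomputable def Fii1 (a u v : ℂ) : ℂ :=
  ((u ^ 2 + 1) * (v ^ 2 + 1) + (a + 1 / a) * (v - u) * (u * v + 1)) / (u * v)

lemma step_ii1 (a u v w : ℂ) (ha : a ≠ 0) (hu : u ≠ 0) (hv : v ≠ 0) (hw : w ≠ 0)
    (hrel : w * ((v + a) * (v + 1 / a)) = -u * ((v - a) * (v - 1 / a))) :
    Fii1 a v w = - Fii1 a u v := by
  have hrel' : w * ((v + a) * (a * v + 1)) = -u * ((v - a) * (a * v - 1)) := by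
    linear_combination a * hrel + (u * (v - a) - w * (v + a)) * mul_inv_cancel₀ ha
  unfold Fii1
  rw [← neg_div, div_eq_div_iff (mul_ne_zero hv hw) (mul_ne_zero hu hv)]
  apply mul_left_cancel₀ ha
  linear_combination (v * (u * w + 1)) * hrel' +
    (v * (u * (w - v) * (v * w + 1) + w * (v - u) * (u * v + 1))) * mul_inv_cancel₀ ha

theorem stmt_1 (a : ℂ) (ha : a ≠ 0) (x : ℕ → ℂ)
    (hrec : ∀ n : ℕ, 1 ≤ n →
      x (n + 1) * ((x n + a) * (x n + 1 / a)) =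
        -x (n - 1) * ((x n - a) * (x n - 1 / a)))
    (hx : ∀ n, x n ≠ 0) (hden : ∀ n, (x n + a) * (x n + 1 / a) ≠ 0) :
    ∀ m n : ℕ, (Fii1 a (x m) (x (m + 1))) ^ 2 = (Fii1 a (x n) (x (n + 1))) ^ 2 := by
  have key : ∀ n : ℕ, Fii1 a (x n) (x (n + 1)) ^ 2 = Fii1 a (x 0) (x 1) ^ 2 := by
    intro n
    induction n with
    | zero => rfl
    | succ k ih =>
      rw [← ih]
      have h := hrec (k + 1) (by omega)
      simp only [Nat.add_sub_cancel] at h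
      have hstep := step_ii1 a (x k) (x (k + 1)) (x (k + 2)) ha (hx k) (hx (k + 1))
        (hx (k + 2)) h
      rw [show k + 1 + 1 = k + 2 from rfl, hstep, neg_pow]
      ring
  intro m n
  rw [key m, key n]
end

section
/- Let t ∈ ℂ and let (x,y) ∈ ℂ² with x ≠ 0, y ≠ 0, x ≠ 1 and (x−t)(x+t) ≠ 0. Set x̄ = (x−t)(x+t)/(y(x−1)) and ȳ = x. Then k(x̄,ȳ) = k(x,y), where k(x,y) = g(x,y)/(x²y²) and g(x,y) = 2x²y³+2x³y²+x²y⁴+x⁴y²−2x³y³−2xy⁴−2x⁴y+x⁴+y⁴+2t²(xy²+x²y−y²−x²)+t⁴. Hence k is a conserved quantity of the HKY mapping, which therefore belongs to Case i-2 (the fibration of degree (4,4) is preserved fiberwise). -/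
open Complex

/-- The degree-(4,4) polynomial of the HKY pencil. -/
noncomputable def gHKY (t x y : ℂ) : ℂ :=
  2 * x ^ 2 * y ^ 3 + 2 * x ^ 3 * y ^ 2 + x ^ 2 * y ^ 4 + x ^ 4 * y ^ 2 -
    2 * x ^ 3 * y ^ 3 - 2 * x * y ^ 4 - 2 * x ^ 4 * y + x ^ 4 + y ^ 4 +
    2 * t ^ 2 * (x * y ^ 2 + x ^ 2 * y - y ^ 2 - x ^ 2) + t ^ 4

/-- The conserved quantity of the HKY mapping. -/
noncomputable def kHKY (t x y : ℂ) : ℂ := gHKY t x y / (x ^ 2 * y ^ 2)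

set_option maxHeartbeats 1000000 in
theorem stmt_10 (t x y : ℂ) (hx : x ≠ 0) (hy : y ≠ 0) (hx1 : x ≠ 1)
    (ht : (x - t) * (x + t) ≠ 0) :
    kHKY t ((x - t) * (x + t) / (y * (x - 1))) x = kHKY t x y := by
  have hx1' : x - 1 ≠ 0 := sub_ne_zero.mpr hx1
  have hD : y * (x - 1) ≠ 0 := mul_ne_zero hy hx1'
  set u : ℂ := (x - t) * (x + t) / (y * (x - 1)) with hu
  have hu0 : u ≠ 0 := div_ne_zero ht hD
  have huD : u * (y * (x - 1)) = (x - t) * (x + t) := div_mul_cancel₀ _ hD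
  have key : gHKY t u x * (x ^ 2 * y ^ 2) * (y * (x - 1)) ^ 4 =
      gHKY t x y * (u ^ 2 * x ^ 2) * (y * (x - 1)) ^ 4 := by
    unfold gHKY
    linear_combination (-x^2*y^5*u^3 + x^2*y^7*u + (5:ℂ)*x^3*y^5*u^3 - (5:ℂ)*x^3*y^7*u + x^4*y^4*u^2 - (2:ℂ)*x^4*y^5*u^2 - (10:ℂ)*x^4*y^5*u^3 - x^4*y^6 + (2:ℂ)*x^4*y^6*u + (10:ℂ)*x^4*y^7*u - (4:ℂ)*x^5*y^4*u^2 + (8:ℂ)*x^5*y^5*u^2 + (10:ℂ)*x^5*y^5*u^3 + (4:ℂ)*x^5*y^6 - (8:ℂ)*x^5*y^6*u - (10:ℂ)*x^5*y^7*u + (6:ℂ)*x^6*y^4*u^2 - (12:ℂ)*x^6*y^5*u^2 - (5:ℂ)*x^6*y^5*u^3 - (6:ℂ)*x^6*y^6 + (12:ℂ)*x^6*y^6*u + (5:ℂ)*x^6*y^7*u - (4:ℂ)*x^7*y^4*u^2 + (8:ℂ)*x^7*y^5*u^2 + x^7*y^5*u^3 + (4:ℂ)*x^7*y^6 - (8:ℂ)*x^7*y^6*u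 - x^7*y^7*u + x^8*y^4*u^2 - (2:ℂ)*x^8*y^5*u^2 - x^8*y^6 + (2:ℂ)*x^8*y^6*u - t^2*x^2*y^4*u^2 + t^2*x^2*y^6 + (4:ℂ)*t^2*x^3*y^4*u^2 - (4:ℂ)*t^2*x^3*y^6 - (6:ℂ)*t^2*x^4*y^4*u^2 + (6:ℂ)*t^2*x^4*y^6 + (4:ℂ)*t^2*x^5*y^4*u^2 - (4:ℂ)*t^2*x^5*y^6 - t^2*x^6*y^4*u^2 + t^2*x^6*y^6) * huD
  rw [kHKY, kHKY, div_eq_div_iff (mul_ne_zero (pow_ne_zero 2 hu0) (pow_ne_zero 2 hx))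
    (mul_ne_zero (pow_ne_zero 2 hx) (pow_ne_zero 2 hy))]
  exact mul_right_cancel₀ (pow_ne_zero 4 hD) key
end

section
/- Let c ∈ ℂ with c ≠ 0 and define W_c(x,y) = (−cx(xy−x−y)/(xy+cx−y), −y(xy−x−y)/(cxy−cx+y)). Then for all (x,y) ∈ ℂ² at which every denominator occurring below is nonzero, W_{1/c}(W_c(x,y)) = (x,y); i.e., the birational map w_{β₁}: (x,y;c) ↦ (W_c(x,y); 1/c) is an involution. -/
open Complex

/-- The reflection `w_{β₁}` with parameter `c`:
    `W_c(x,y) = (−cx(xy−x−y)/(xy+cx−y), −y(xy−x−y)/(cxy−cx+y))`. -/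
noncomputable def Wbeta (c : ℂ) (p : ℂ × ℂ) : ℂ × ℂ :=
  (-c * p.1 * (p.1 * p.2 - p.1 - p.2) / (p.1 * p.2 + c * p.1 - p.2),
   -p.2 * (p.1 * p.2 - p.1 - p.2) / (c * p.1 * p.2 - c * p.1 + p.2))

/-!
Write `P = xy − x − y`, `D₁ = xy + cx − y`, `D₂ = cxy − cx + y` and `(X, Y) = W_c(x, y)`, so
`XD₁ = −cxP` and `YD₂ = −yP`. The form `P` is invariant: `XY − X − Y = P`, which after clearing
denominators is the identity `cxyP + cxD₂ + yD₁ = D₁D₂`. Hence the denominators of `W_{1/c}` at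
`(X, Y)` are `P + (1 + 1/c)X = P²/D₁` and `P/c + (1 + 1/c)Y = P²/D₂`, and the coordinates of
`W_{1/c}(X, Y)` collapse to `x` and `y`.
-/

section

variable {c x y : ℂ}

theorem Wbeta_fst_mul (hd1 : x * y + c * x - y ≠ 0) :
    (Wbeta c (x, y)).1 * (x * y + c * x - y) = -c * x * (x * y - x - y) :=
  div_mul_cancel₀ _ hd1

theorem Wbeta_snd_mul (hd2 : c * x * y - c * x + y ≠ 0) :
    (Wbeta c (x, y)).2 * (c * x * y - c * x + y) = -y * (x * y - x - y) :=
  div_mul_cancel₀ _ hd2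

theorem Wbeta_mul_sub_sub (hd1 : x * y + c * x - y ≠ 0) (hd2 : c * x * y - c * x + y ≠ 0) :
    (Wbeta c (x, y)).1 * (Wbeta c (x, y)).2 - (Wbeta c (x, y)).1 - (Wbeta c (x, y)).2 =
      x * y - x - y := by
  refine mul_left_cancel₀ (mul_ne_zero hd1 hd2) ?_
  linear_combination
    ((Wbeta c (x, y)).2 * (c * x * y - c * x + y) - (c * x * y - c * x + y)) * Wbeta_fst_mul hd1 +
    (-c * x * (x * y - x - y) - (x * y + c * x - y)) * Wbeta_snd_mul hd2

theorem Wbeta_fst_denom_eq (hc : c ≠ 0) (hd1 : x * y + c * x - y ≠ 0)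
    (hd2 : c * x * y - c * x + y ≠ 0) :
    (Wbeta c (x, y)).1 * (Wbeta c (x, y)).2 + (1 / c) * (Wbeta c (x, y)).1 -
      (Wbeta c (x, y)).2 = (x * y - x - y) ^ 2 / (x * y + c * x - y) := by
  rw [eq_div_iff hd1]
  linear_combination (x * y + c * x - y) * Wbeta_mul_sub_sub hd1 hd2 +
    (1 + 1 / c) * Wbeta_fst_mul hd1 - x * (x * y - x - y) * one_div_mul_cancel hc

theorem Wbeta_snd_denom_eq (hc : c ≠ 0) (hd1 : x * y + c * x - y ≠ 0)
    (hd2 : c * x * y - c * x + y ≠ 0) :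
    (1 / c) * (Wbeta c (x, y)).1 * (Wbeta c (x, y)).2 - (1 / c) * (Wbeta c (x, y)).1 +
      (Wbeta c (x, y)).2 = (x * y - x - y) ^ 2 / (c * x * y - c * x + y) := by
  rw [eq_div_iff hd2]
  linear_combination (1 / c) * (c * x * y - c * x + y) * Wbeta_mul_sub_sub hd1 hd2 +
    (1 + 1 / c) * Wbeta_snd_mul hd2 + (x * y - x - y) * (x * y - x) * one_div_mul_cancel hc

end

theorem stmt_14_general (c x y : ℂ) (hc : c ≠ 0)
    (hd1 : x * y + c * x - y ≠ 0)
    (hd2 : c * x * y - c * x + y ≠ 0)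
    (hd3 : (Wbeta c (x, y)).1 * (Wbeta c (x, y)).2 + (1 / c) * (Wbeta c (x, y)).1 -
      (Wbeta c (x, y)).2 ≠ 0) :
    Wbeta (1 / c) (Wbeta c (x, y)) = (x, y) := by
  have hP : x * y - x - y ≠ 0 := by
    rw [Wbeta_fst_denom_eq hc hd1 hd2] at hd3
    exact ne_zero_pow two_ne_zero (div_ne_zero_iff.mp hd3).1
  have hinv := Wbeta_mul_sub_sub hd1 hd2
  have hden1 := Wbeta_fst_denom_eq hc hd1 hd2
  have hden2 := Wbeta_snd_denom_eq hc hd1 hd2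
  have hX := Wbeta_fst_mul hd1
  have hY := Wbeta_snd_mul hd2
  set p := Wbeta c (x, y)
  ext
  · simp only [Wbeta]
    rw [hinv, hden1, div_div_eq_mul_div, div_eq_iff (pow_ne_zero 2 hP)]
    linear_combination
      (-(1 / c) * (x * y - x - y)) * hX + x * (x * y - x - y) ^ 2 * one_div_mul_cancel hc
  · simp only [Wbeta]
    rw [hinv, hden2, div_div_eq_mul_div, div_eq_iff (pow_ne_zero 2 hP)]
    linear_combination (-(x * y - x - y)) * hY

theorem stmt_14 (c x y : ℂ) (hc : c ≠ 0)
    (hd1 : x * y + c * x - y ≠ 0)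
    (hd2 : c * x * y - c * x + y ≠ 0)
    (hd3 : (Wbeta c (x, y)).1 * (Wbeta c (x, y)).2 + (1 / c) * (Wbeta c (x, y)).1 -
      (Wbeta c (x, y)).2 ≠ 0)
    (hd4 : (1 / c) * (Wbeta c (x, y)).1 * (Wbeta c (x, y)).2 -
      (1 / c) * (Wbeta c (x, y)).1 + (Wbeta c (x, y)).2 ≠ 0) :
    Wbeta (1 / c) (Wbeta c (x, y)) = (x, y) :=
  stmt_14_general c x y hc hd1 hd2 hd3
end

section
/- Let b₀, b₁, b₂, c ∈ ℂ be nonzero and set q = (b₀b₁b₂)⁻¹. Define ρ(x,y) = (1/y, cx/y), the reflection w_{α₂} with parameter β by (x,y) ↦ (βx(y−1)/(βy−1), βy), and the reflection w_{α₁} with parameter γ by (x,y) ↦ (x/γ, y(x−1)/(x−γ)). Then for all (x,y) at which every denominator occurring is nonzero, the composition w_{α₁} (with γ = b₀b₂) ∘ w_{α₂} (with β = b₀) ∘ ρ maps (x,y) to ((cx−y)/(b₂y(b₀cx−y)), cx(b₀(cx−y)−y(b₀cx−y))/(y((cx−y)−b₂y(b₀cx−y)))), and the accompanying parameter action is (b₀,b₁,b₂,c)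 ↦ (b₀²b₁b₂, 1/(b₀b₂), b₂, c) = (b₀/q, b₁q, b₂, c); i.e., w_{α₁}∘w_{α₂}∘ρ is the qP_III equation. -/
open Complex

/-- The rotation `ρ`: `(x,y) ↦ (1/y, cx/y)`. -/
noncomputable def rho (c : ℂ) (p : ℂ × ℂ) : ℂ × ℂ :=
  (1 / p.2, c * p.1 / p.2)

/-- The reflection `w_{α₂}` with parameter `β`: `(x,y) ↦ (βx(y−1)/(βy−1), βy)`. -/
noncomputable def wAlpha2 (β : ℂ) (p : ℂ × ℂ) : ℂ × ℂ :=
  (β * p.1 * (p.2 - 1) / (β * p.2 - 1), β * p.2)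

/-- The reflection `w_{α₁}` with parameter `γ`: `(x,y) ↦ (x/γ, y(x−1)/(x−γ))`. -/
noncomputable def wAlpha1 (γ : ℂ) (p : ℂ × ℂ) : ℂ × ℂ :=
  (p.1 / γ, p.2 * (p.1 - 1) / (p.1 - γ))


theorem wAlpha2_rho {β c x y : ℂ} (hy : y ≠ 0) (h : β * c * x - y ≠ 0) :
    wAlpha2 β (rho c (x, y)) = (β * (c * x - y) / (y * (β * c * x - y)), β * c * x / y) := by
  simp only [rho, wAlpha2, Prod.mk.injEq]
  constructor
  · field_simp
  · ring

theorem wAlpha1_mul_div {β b n m Y : ℂ} (hβ : β ≠ 0) (hm : m ≠ 0) :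
    wAlpha1 (β * b) (β * n / m, Y) = (n / (b * m), Y * (β * n - m) / (β * (n - b * m))) := by
  have hsub_one : β * n / m - 1 = (β * n - m) / m := by field_simp
  have hsub : β * n / m - β * b = β * (n - b * m) / m := by field_simp
  simp only [wAlpha1, Prod.mk.injEq]
  constructor
  · rw [div_div, mul_left_comm, mul_div_mul_left _ _ hβ, mul_comm m b]
  · rw [hsub_one, hsub, mul_div_assoc, div_div_div_cancel_right₀ hm, mul_div_assoc]

theorem wAlpha1_wAlpha2_rho {β b c x y : ℂ} (hβ : β ≠ 0) (hy : y ≠ 0)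
    (h : β * (rho c (x, y)).2 - 1 ≠ 0) :
    wAlpha1 (β * b) (wAlpha2 β (rho c (x, y))) =
      ((c * x - y) / (b * y * (β * c * x - y)),
       c * x * (β * (c * x - y) - y * (β * c * x - y)) /
         (y * ((c * x - y) - b * y * (β * c * x - y)))) := by
  have hden : β * c * x - y ≠ 0 := by
    contrapose! h
    simp only [rho]
    field_simp
    linear_combination h
  rw [wAlpha2_rho hy hden, wAlpha1_mul_div hβ (mul_ne_zero hy hden), mul_assoc b]
  congr 1
  rw [div_mul_eq_mul_div, div_div, mul_left_comm y β, mul_assoc β c x, mul_assoc β,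
    mul_div_mul_left _ _ hβ]

theorem qP3_parameters {b₀ b₁ b₂ c q : ℂ} (hb₁ : b₁ ≠ 0) (hq : q = (b₀ * b₁ * b₂)⁻¹) :
    ((b₀ ^ 2 * b₁ * b₂, 1 / (b₀ * b₂), b₂, c) : ℂ × ℂ × ℂ × ℂ) = (b₀ / q, b₁ * q, b₂, c) := by
  subst hq
  simp only [Prod.mk.injEq, and_true]
  constructor
  · rw [div_inv_eq_mul]; ring
  · field_simp

theorem stmt_17_general (b₀ b₁ b₂ c x y : ℂ)
    (hb₀ : b₀ ≠ 0) (hb₁ : b₁ ≠ 0)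
    (q : ℂ) (hq : q = (b₀ * b₁ * b₂)⁻¹)
    (hy : y ≠ 0)
    (h2 : b₀ * (rho c (x, y)).2 - 1 ≠ 0) :
    wAlpha1 (b₀ * b₂) (wAlpha2 b₀ (rho c (x, y))) =
      ((c * x - y) / (b₂ * y * (b₀ * c * x - y)),
       c * x * (b₀ * (c * x - y) - y * (b₀ * c * x - y)) /
         (y * ((c * x - y) - b₂ * y * (b₀ * c * x - y)))) ∧
    ((b₀ ^ 2 * b₁ * b₂, 1 / (b₀ * b₂), b₂, c) : ℂ × ℂ × ℂ × ℂ) =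
      (b₀ / q, b₁ * q, b₂, c) :=
  ⟨wAlpha1_wAlpha2_rho hb₀ hy h2, qP3_parameters hb₁ hq⟩

theorem stmt_17 (b₀ b₁ b₂ c x y : ℂ)
    (hb₀ : b₀ ≠ 0) (hb₁ : b₁ ≠ 0) (hb₂ : b₂ ≠ 0) (hc : c ≠ 0)
    (q : ℂ) (hq : q = (b₀ * b₁ * b₂)⁻¹)
    (hy : y ≠ 0)
    (h2 : b₀ * (rho c (x, y)).2 - 1 ≠ 0)
    (h3 : (wAlpha2 b₀ (rho c (x, y))).1 - b₀ * b₂ ≠ 0)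
    (hd1 : b₂ * y * (b₀ * c * x - y) ≠ 0)
    (hd2 : y * ((c * x - y) - b₂ * y * (b₀ * c * x - y)) ≠ 0) :
    wAlpha1 (b₀ * b₂) (wAlpha2 b₀ (rho c (x, y))) =
      ((c * x - y) / (b₂ * y * (b₀ * c * x - y)),
       c * x * (b₀ * (c * x - y) - y * (b₀ * c * x - y)) /
         (y * ((c * x - y) - b₂ * y * (b₀ * c * x - y)))) ∧
    ((b₀ ^ 2 * b₁ * b₂, 1 / (b₀ * b₂), b₂, c) : ℂ × ℂ × ℂ × ℂ) =
      (b₀ / q, b₁ * q, b₂, c) :=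
  stmt_17_general b₀ b₁ b₂ c x y hb₀ hb₁ q hq hy h2
end

section
/- Let b ∈ ℂ with b ≠ 0 and let i denote the imaginary unit. Let T_{(b₀,b₁,b₂,c)}(x,y) = ((cx−y)/(b₂y(b₀cx−y)), cx(b₀(cx−y)−y(b₀cx−y))/(y((cx−y)−b₂y(b₀cx−y)))) denote the qP_III mapping with parameter action (b₀,b₁,b₂,c) ↦ (b₀/q, b₁q, b₂, c), q = (b₀b₁b₂)⁻¹, and let σ_{(b₁,b₂)}(x,y) = (b₁/x, 1/(b₂y)). Specialize (b₀,b₁,b₂,c) = (1/b, −1, b, i), so that q = −1 and one application of T changes the parameters to (−1/b, 1, b, i) while a second application restores them. Then for all (x,y) at which all denominators occurring are nonzero, σ_{(−1,b)} ∘ T_{(−1/b,1,b,i)} ∘ T_{(1/b,−1,b,i)} (x,y) = φ(x,y), where φ is the Case ii-2 mapping φ(x,y) = ( x(−ix(x+1)+y(bx+1))/(y(x(x−b)+iby(x−1))), x(x(x+1)+iby(x−1))/(b(x(x+1)−iy(x−1))) ). -/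
open Complex

/-- The `qP_III` mapping `T_{(b₀,b₁,b₂,c)}` on the family of generalized
    Halphen surfaces of type `A₅⁽¹⁾` (the parameter `b₁` does not enter
    the formula; it only enters the accompanying parameter action
    `(b₀,b₁,b₂,c) ↦ (b₀/q, b₁q, b₂, c)`, `q = (b₀b₁b₂)⁻¹`). -/
noncomputable def qPIII (b₀ _b₁ b₂ c : ℂ) (p : ℂ × ℂ) : ℂ × ℂ :=
  ((c * p.1 - p.2) / (b₂ * p.2 * (b₀ * c * p.1 - p.2)),
   c * p.1 * (b₀ * (c * p.1 - p.2) - p.2 * (b₀ * c * p.1 - p.2)) /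
     (p.2 * ((c * p.1 - p.2) - b₂ * p.2 * (b₀ * c * p.1 - p.2))))

/-- The automorphism `σ_{(b₁,b₂)}(x,y) = (b₁/x, 1/(b₂y))`. -/
noncomputable def sigmaAut (b₁ b₂ : ℂ) (p : ℂ × ℂ) : ℂ × ℂ :=
  (b₁ / p.1, 1 / (b₂ * p.2))

/-- The Case ii-2 mapping `φ`. -/
noncomputable def phiII2 (b : ℂ) (p : ℂ × ℂ) : ℂ × ℂ :=
  (p.1 * (-Complex.I * p.1 * (p.1 + 1) + p.2 * (b * p.1 + 1)) /
     (p.2 * (p.1 * (p.1 - b) + Complex.I * b * p.2 * (p.1 - 1))),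
   p.1 * (p.1 * (p.1 + 1) + Complex.I * b * p.2 * (p.1 - 1)) /
     (b * (p.1 * (p.1 + 1) - Complex.I * p.2 * (p.1 - 1))))


/-!
Since `(1/b) · b = 1`, the numerator of the second coordinate of the first step is `1/b` times
its denominator, so `T_{(1/b,−1,b,i)}(x, y) = ((ix − y)/(y(ix − by)), ix/(by))`. Composing with
`σ` merely inverts the two fractions produced by the second step, so both sides are explicit
rational functions of `x, y`; after clearing denominators they agree as polynomials modulo
`i² = −1`.
-/

theorem qPIII_snd_of_mul_eq_one {b₀ b₂ : ℂ} (b₁ c : ℂ) {p : ℂ × ℂ} (h : b₀ * b₂ = 1)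
    (hK : (c * p.1 - p.2) - b₂ * p.2 * (b₀ * c * p.1 - p.2) ≠ 0) :
    (qPIII b₀ b₁ b₂ c p).2 = c * b₀ * p.1 / p.2 := by
  have hnum : b₀ * (c * p.1 - p.2) - p.2 * (b₀ * c * p.1 - p.2) =
      b₀ * ((c * p.1 - p.2) - b₂ * p.2 * (b₀ * c * p.1 - p.2)) := by
    linear_combination (p.2 * (b₀ * c * p.1 - p.2)) * h
  simp only [qPIII]
  rw [hnum, ← mul_assoc, mul_div_mul_right _ _ hK, mul_right_comm]

theorem sigmaAut_qPIII (β b₀ b₁ b₂ c : ℂ) (p : ℂ × ℂ) :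
    sigmaAut β b₂ (qPIII b₀ b₁ b₂ c p) =
      (β * (b₂ * p.2 * (b₀ * c * p.1 - p.2)) / (c * p.1 - p.2),
       p.2 * ((c * p.1 - p.2) - b₂ * p.2 * (b₀ * c * p.1 - p.2)) /
         (b₂ * (c * p.1 * (b₀ * (c * p.1 - p.2) - p.2 * (b₀ * c * p.1 - p.2))))) := by
  simp only [sigmaAut, qPIII, div_div_eq_mul_div, mul_div_assoc', one_mul]

theorem qPIII_one_div_neg_one_I {b x y : ℂ} (hb : b ≠ 0) (hy : y ≠ 0)
    (hK : (I * x - y) - b * y * ((1 / b) * I * x - y) ≠ 0) :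
    qPIII (1 / b) (-1) b I (x, y) = ((I * x - y) / (y * (I * x - b * y)), I * x / (b * y)) := by
  refine Prod.ext ?_ ?_
  · simp only [qPIII]
    field_simp
  · rw [qPIII_snd_of_mul_eq_one (p := (x, y)) _ _ (one_div_mul_cancel hb) hK]
    field_simp

theorem stmt_19_general (b x y : ℂ) (hb : b ≠ 0)
    -- denominators of the first application `T_{(1/b,−1,b,i)}`:
    (hd1 : b * y * ((1 / b) * Complex.I * x - y) ≠ 0)
    (hd2 : y * ((Complex.I * x - y) - b * y * ((1 / b) * Complex.I * x - y)) ≠ 0)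
    -- denominators of `σ_{(−1,b)}`:
    (hd5 : (qPIII (-1 / b) 1 b Complex.I (qPIII (1 / b) (-1) b Complex.I (x, y))).1 ≠ 0)
    (hd6 : b * (qPIII (-1 / b) 1 b Complex.I (qPIII (1 / b) (-1) b Complex.I (x, y))).2 ≠ 0)
    -- denominators of `φ`:
    (hd7 : y * (x * (x - b) + Complex.I * b * y * (x - 1)) ≠ 0)
    (hd8 : b * (x * (x + 1) - Complex.I * y * (x - 1)) ≠ 0) :
    sigmaAut (-1) b
        (qPIII (-1 / b) 1 b Complex.I (qPIII (1 / b) (-1) b Complex.I (x, y))) =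
      phiII2 b (x, y) := by
  have hy : y ≠ 0 := right_ne_zero_of_mul (left_ne_zero_of_mul hd1)
  have hxy : I * x - b * y ≠ 0 := by
    have h : (1 / b) * I * x - y = (I * x - b * y) / b := by field_simp
    exact left_ne_zero_of_mul (h ▸ right_ne_zero_of_mul hd1)
  rw [qPIII_one_div_neg_one_I hb hy (right_ne_zero_of_mul hd2)] at hd5 hd6 ⊢
  simp only [qPIII] at hd5 hd6
  have hnum₁ := (div_ne_zero_iff.mp hd5).1
  have hnum₂ := (div_ne_zero_iff.mp (right_ne_zero_of_mul hd6)).1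
  rw [sigmaAut_qPIII, phiII2]
  refine Prod.ext ?_ ?_
  · rw [div_eq_div_iff hnum₁ hd7]
    field_simp
    ring_nf
    simp only [I_sq, I_pow_three]
    ring_nf
  · rw [div_eq_div_iff (mul_ne_zero hb hnum₂) hd8]
    field_simp
    ring_nf
    simp only [I_sq, I_pow_three, I_pow_four]
    ring_nf

theorem stmt_19 (b x y : ℂ) (hb : b ≠ 0)
    -- denominators of the first application `T_{(1/b,−1,b,i)}`:
    (hd1 : b * y * ((1 / b) * Complex.I * x - y) ≠ 0)
    (hd2 : y * ((Complex.I * x - y) - b * y * ((1 / b) * Complex.I * x - y)) ≠ 0)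
    -- denominators of the second application `T_{(−1/b,1,b,i)}`:
    (hd3 : b * (qPIII (1 / b) (-1) b Complex.I (x, y)).2 *
      ((-1 / b) * Complex.I * (qPIII (1 / b) (-1) b Complex.I (x, y)).1 -
        (qPIII (1 / b) (-1) b Complex.I (x, y)).2) ≠ 0)
    (hd4 : (qPIII (1 / b) (-1) b Complex.I (x, y)).2 *
      ((Complex.I * (qPIII (1 / b) (-1) b Complex.I (x, y)).1 -
          (qPIII (1 / b) (-1) b Complex.I (x, y)).2) -
        b * (qPIII (1 / b) (-1) b Complex.I (x, y)).2 *
          ((-1 / b) * Complex.I * (qPIII (1 / b) (-1) b Complex.I (x, y)).1 -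
            (qPIII (1 / b) (-1) b Complex.I (x, y)).2)) ≠ 0)
    -- denominators of `σ_{(−1,b)}`:
    (hd5 : (qPIII (-1 / b) 1 b Complex.I (qPIII (1 / b) (-1) b Complex.I (x, y))).1 ≠ 0)
    (hd6 : b * (qPIII (-1 / b) 1 b Complex.I (qPIII (1 / b) (-1) b Complex.I (x, y))).2 ≠ 0)
    -- denominators of `φ`:
    (hd7 : y * (x * (x - b) + Complex.I * b * y * (x - 1)) ≠ 0)
    (hd8 : b * (x * (x + 1) - Complex.I * y * (x - 1)) ≠ 0) :
    sigmaAut (-1) b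
        (qPIII (-1 / b) 1 b Complex.I (qPIII (1 / b) (-1) b Complex.I (x, y))) =
      phiII2 b (x, y) :=
  stmt_19_general b x y hb hd1 hd2 hd5 hd6 hd7 hd8
end
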